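/- Let A and B be admissible twigs (all entries ≥ 2). The weight sequence obtained by concatenating A, the single entry 1, and B contracts by successive blow-downs to the single-entry sequence [0] if and only if B = A*, the adjoint of A. -/

import Mathlib

/-- The tridiagonal matrix associated to a twig `[m₁,…,m_r]`: diagonal entries `mᵢ`,
sub- and super-diagonal entries `-1`. -/
def tridiagMatrix (L : List ℤ) : Matrix (Fin L.length) (Fin L.length) ℤ :=
  Matrix.of fun i j =>
    if i = j then L.get i
    else if (i : ℕ) + 1 = (j : ℕ) ∨ (j : ℕ) + 1 = (i : ℕ) then -1 else 0

/-- The determinant `d(A)` of a twig; `d(∅) = 1` by the empty determinant convention. -/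
def twigDet (L : List ℤ) : ℤ := (tridiagMatrix L).det

/-- The inductance `e(A) = d(Ā)/d(A)`. -/
def inductance (L : List ℤ) : ℚ := (twigDet L.tail : ℚ) / (twigDet L : ℚ)

/-- A twig is admissible if all entries are at least 2. -/
def Admissible (L : List ℤ) : Prop := ∀ m ∈ L, (2 : ℤ) ≤ m

/-- A single blow-down (contraction) step on a weight sequence: an entry equal to `1`
is removed and each adjacent entry is decreased by `1`. -/
inductive ContractStep : List ℤ → List ℤ → Prop
  /-- contracting an interior entry `1` with neighbours `a` and `b` -/
  | interior (L R : List ℤ) (a b : ℤ) :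
      ContractStep (L ++ a :: 1 :: b :: R) (L ++ (a - 1) :: (b - 1) :: R)
  /-- contracting a `1` at the left end -/
  | left (b : ℤ) (R : List ℤ) : ContractStep (1 :: b :: R) ((b - 1) :: R)
  /-- contracting a `1` at the right end -/
  | right (L : List ℤ) (a : ℤ) : ContractStep (L ++ [a, 1]) (L ++ [a - 1])
  /-- contracting a lone `1` -/
  | single : ContractStep [1] []

/-- `Contracts L M` : `L` can be transformed into `M` by finitely many contraction steps. -/
def Contracts : List ℤ → List ℤ → Prop := Relation.ReflTransGen ContractStep

lemma twigDet_nil : twigDet [] = 1 := by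
  simp [twigDet, Matrix.det_isEmpty]

lemma twigDet_singleton (m : ℤ) : twigDet [m] = m := by
  simp [twigDet, Matrix.det_fin_one, tridiagMatrix]

lemma tridiag_submatrix_succ (m : ℤ) (T : List ℤ) :
    (tridiagMatrix (m::T)).submatrix Fin.succ Fin.succ = tridiagMatrix T := by
  ext i j
  simp only [tridiagMatrix, Matrix.submatrix_apply, Matrix.of_apply]
  by_cases h : i = j
  · subst h; simp
  · have h2 : ¬ (Fin.succ i = Fin.succ j) := fun hh => h (Fin.succ_injective _ hh)
    simp only [h, h2, if_false, Fin.val_succ]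
    congr 1
    apply propext; omega

lemma twigDet_cons_cons (m k : ℤ) (T : List ℤ) :
    twigDet (m::k::T) = m * twigDet (k::T) - twigDet T := by
  classical
  let M : Matrix (Fin (T.length + 2)) (Fin (T.length + 2)) ℤ := tridiagMatrix (m::k::T)
  have hdet : twigDet (m::k::T) = ∑ j : Fin (T.length + 2),
      (-1)^(j:ℕ) * M 0 j * (M.submatrix Fin.succ j.succAbove).det :=
    Matrix.det_succ_row_zero M
  rw [hdet, Fin.sum_univ_succ, Fin.sum_univ_succ]
  have h00 : M 0 0 = m := rfl
  have h01 : M 0 (Fin.succ (0 : Fin (T.length+1))) = -1 := rfl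
  have hrest : ∀ j : Fin T.length, M 0 (Fin.succ (Fin.succ j)) = 0 := by
    intro j
    show (tridiagMatrix (m::k::T)) (0 : Fin (T.length+2)) (Fin.succ (Fin.succ j)) = 0
    simp only [tridiagMatrix, Matrix.of_apply]
    rw [if_neg, if_neg]
    · show ¬((0:ℕ) + 1 = (j:ℕ)+1+1 ∨ ((j:ℕ)+1+1) + 1 = (0:ℕ)); omega
    · exact fun h => (Fin.succ_ne_zero _) h.symm
  have hsum0 : (∑ j : Fin T.length,
      (-1)^((Fin.succ (Fin.succ j) : Fin (T.length+2)):ℕ) * M 0 (Fin.succ (Fin.succ j)) *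
        (M.submatrix Fin.succ (Fin.succ (Fin.succ j)).succAbove).det) = 0 := by
    apply Finset.sum_eq_zero
    intro j _
    rw [hrest j]; ring
  have hsub0 : (M.submatrix Fin.succ ((0 : Fin (T.length+2)).succAbove)).det
      = twigDet (k::T) := by
    rw [Fin.succAbove_zero]
    rw [tridiag_submatrix_succ m (k::T)]
    rfl
  -- the j = 1 submatrix
  have hsub1 : (M.submatrix Fin.succ ((Fin.succ (0 : Fin (T.length+1))).succAbove)).det
      = - twigDet T := by
    set N := M.submatrix Fin.succ ((Fin.succ (0 : Fin (T.length+1))).succAbove) with hN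
    have hdetN : N.det = ∑ i : Fin (T.length + 1),
        (-1)^(i:ℕ) * N i 0 * (N.submatrix i.succAbove Fin.succ).det :=
      Matrix.det_succ_column_zero N
    rw [hdetN, Fin.sum_univ_succ]
    have hN00 : N 0 0 = -1 := by
      show (tridiagMatrix (m::k::T)) (Fin.succ (0 : Fin (T.length+1))) ((Fin.succ (0 : Fin (T.length+1))).succAbove (0 : Fin (T.length+1))) = -1
      rfl
    have hNrest : ∀ i : Fin T.length, N (Fin.succ i) 0 = 0 := by
      intro i
      show (tridiagMatrix (m::k::T)) (Fin.succ (Fin.succ i)) ((Fin.succ (0 : Fin (T.length+1))).succAbove (0 : Fin (T.length+1))) = 0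
      have hcol : (Fin.succ (0 : Fin (T.length+1))).succAbove (0 : Fin (T.length+1)) = (0 : Fin (T.length+2)) := rfl
      rw [hcol]
      simp only [tridiagMatrix, Matrix.of_apply]
      rw [if_neg, if_neg]
      · show ¬(((i:ℕ)+1+1) + 1 = (0:ℕ) ∨ (0:ℕ) + 1 = (i:ℕ)+1+1); omega
      · exact fun h => (Fin.succ_ne_zero _) h
    have hsumN : (∑ i : Fin T.length,
        (-1)^((Fin.succ i : Fin (T.length+1)):ℕ) * N (Fin.succ i) 0 *
          (N.submatrix (Fin.succ i).succAbove Fin.succ).det) = 0 := by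
      apply Finset.sum_eq_zero
      intro i _
      rw [hNrest i]; ring
    rw [hsumN, hN00]
    have hinner : (N.submatrix ((0 : Fin (T.length+1)).succAbove) Fin.succ) = tridiagMatrix T := by
      rw [hN, Matrix.submatrix_submatrix, Fin.succAbove_zero]
      have hcols : ((Fin.succ (0 : Fin (T.length+1))).succAbove ∘ Fin.succ)
          = (Fin.succ ∘ Fin.succ : Fin T.length → Fin (T.length+2)) := by
        funext j
        ext
        simp [Fin.succAbove, Fin.lt_def]
      rw [hcols]
      have : M.submatrix (Fin.succ ∘ Fin.succ) (Fin.succ ∘ Fin.succ)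
          = ((tridiagMatrix (m::k::T)).submatrix Fin.succ Fin.succ).submatrix Fin.succ Fin.succ := by
        rw [Matrix.submatrix_submatrix]
      rw [this, tridiag_submatrix_succ m (k::T), tridiag_submatrix_succ k T]
    rw [hinner]
    show (-1)^(0:ℕ) * (-1) * twigDet T + 0 = - twigDet T
    ring
  rw [hsum0, h00, h01, hsub0, hsub1]
  show (-1)^(0:ℕ) * m * twigDet (k::T) + ((-1)^(1:ℕ) * (-1) * (- twigDet T) + 0) = _
  ring

def Tm (m : ℤ) : Matrix (Fin 2) (Fin 2) ℤ := !![m, -1; 1, 0]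

def Pm (L : List ℤ) : Matrix (Fin 2) (Fin 2) ℤ := (L.map Tm).prod

lemma Pm_nil : Pm [] = 1 := rfl

lemma Pm_cons (m : ℤ) (T : List ℤ) : Pm (m::T) = Tm m * Pm T := by
  simp [Pm]

lemma Pm_append (X Y : List ℤ) : Pm (X ++ Y) = Pm X * Pm Y := by
  simp [Pm]

lemma mul00 (M N : Matrix (Fin 2) (Fin 2) ℤ) :
    (M * N) 0 0 = M 0 0 * N 0 0 + M 0 1 * N 1 0 := by
  simp [Matrix.mul_apply, Fin.sum_univ_two]

lemma mul10 (M N : Matrix (Fin 2) (Fin 2) ℤ) :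
    (M * N) 1 0 = M 1 0 * N 0 0 + M 1 1 * N 1 0 := by
  simp [Matrix.mul_apply, Fin.sum_univ_two]

lemma mul01 (M N : Matrix (Fin 2) (Fin 2) ℤ) :
    (M * N) 0 1 = M 0 0 * N 0 1 + M 0 1 * N 1 1 := by
  simp [Matrix.mul_apply, Fin.sum_univ_two]

lemma mul11 (M N : Matrix (Fin 2) (Fin 2) ℤ) :
    (M * N) 1 1 = M 1 0 * N 0 1 + M 1 1 * N 1 1 := by
  simp [Matrix.mul_apply, Fin.sum_univ_two]

@[simp] lemma Tm00 (m : ℤ) : Tm m 0 0 = m := rfl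

@[simp] lemma Tm01 (m : ℤ) : Tm m 0 1 = -1 := rfl

@[simp] lemma Tm10 (m : ℤ) : Tm m 1 0 = 1 := rfl

@[simp] lemma Tm11 (m : ℤ) : Tm m 1 1 = 0 := rfl

lemma Pm_cons00 (m : ℤ) (T : List ℤ) : Pm (m::T) 0 0 = m * Pm T 0 0 - Pm T 1 0 := by
  rw [Pm_cons, mul00]; simp; ring

lemma Pm_cons10 (m : ℤ) (T : List ℤ) : Pm (m::T) 1 0 = Pm T 0 0 := by
  rw [Pm_cons, mul10]; simp

lemma Pm_cons01 (m : ℤ) (T : List ℤ) : Pm (m::T) 0 1 = m * Pm T 0 1 - Pm T 1 1 := by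
  rw [Pm_cons, mul01]; simp; ring

lemma Pm_cons11 (m : ℤ) (T : List ℤ) : Pm (m::T) 1 1 = Pm T 0 1 := by
  rw [Pm_cons, mul11]; simp

@[simp] lemma Pm_nil00 : Pm [] 0 0 = 1 := rfl

@[simp] lemma Pm_nil10 : Pm [] 1 0 = 0 := rfl

@[simp] lemma Pm_nil01 : Pm [] 0 1 = 0 := rfl

@[simp] lemma Pm_nil11 : Pm [] 1 1 = 1 := rfl

theorem twigDet_eq_Pm : ∀ L : List ℤ, twigDet L = Pm L 0 0
  | [] => by simp [twigDet_nil]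
  | [m] => by rw [twigDet_singleton, Pm_cons00]; simp
  | m::k::T => by
      rw [twigDet_cons_cons, twigDet_eq_Pm (k::T), twigDet_eq_Pm T,
        Pm_cons00 m (k::T), Pm_cons10 k T, Pm_cons00 k T]

lemma twigDet_tail (L : List ℤ) (h : L ≠ []) : twigDet L.tail = Pm L 1 0 := by
  cases L with
  | nil => exact absurd rfl h
  | cons m T => rw [List.tail_cons, twigDet_eq_Pm T, Pm_cons10]

lemma Pm_reverse (L : List ℤ) :
    Pm L.reverse = !![Pm L 0 0, -(Pm L 1 0); -(Pm L 0 1), Pm L 1 1] := by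
  induction L with
  | nil =>
      ext i j
      fin_cases i <;> fin_cases j <;> simp [Pm_nil]
  | cons m T ih =>
      rw [List.reverse_cons, Pm_append, ih]
      ext i j
      fin_cases i <;> fin_cases j <;>
        simp [mul00, mul01, mul10, mul11, Pm_cons, Pm_cons00, Pm_cons10, Pm_cons01, Pm_cons11,
          Pm_nil] <;> ring

lemma Pm_pos : ∀ (L : List ℤ), Admissible L →
    0 ≤ Pm L 1 0 ∧ Pm L 1 0 < Pm L 0 0 ∧
    0 ≤ -Pm L 0 1 ∧ -Pm L 1 1 < -Pm L 0 1 ∧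
    1 ≤ Pm L 0 0 + Pm L 0 1 ∧
    0 ≤ Pm L 1 0 + Pm L 1 1 ∧ Pm L 1 0 + Pm L 1 1 ≤ Pm L 0 0 + Pm L 0 1
  | [] => by intro _; norm_num
  | m::T => by
      intro h
      have hm : (2:ℤ) ≤ m := h m List.mem_cons_self
      have hT : Admissible T := fun x hx => h x (List.mem_cons_of_mem m hx)
      obtain ⟨h1, h2, h3, h4, h5, h6, h7⟩ := Pm_pos T hT
      rw [Pm_cons00, Pm_cons10, Pm_cons01, Pm_cons11]
      refine ⟨by linarith, by nlinarith, by nlinarith, by nlinarith, by nlinarith,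
        by nlinarith, by nlinarith⟩

lemma Pm_pos_ne (L : List ℤ) (h : Admissible L) (hne : L ≠ []) :
    1 ≤ Pm L 1 0 ∧ 1 ≤ -Pm L 0 1 := by
  cases L with
  | nil => exact absurd rfl hne
  | cons m T =>
      have hm : (2:ℤ) ≤ m := h m List.mem_cons_self
      have hT : Admissible T := fun x hx => h x (List.mem_cons_of_mem m hx)
      obtain ⟨h1, h2, h3, h4, h5, h6, h7⟩ := Pm_pos T hT
      rw [Pm_cons10, Pm_cons01]
      constructor
      · linarith
      · nlinarith

lemma Tm_key (a b : ℤ) : Tm a * Tm 1 * Tm b = Tm (a-1) * Tm (b-1) := by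
  ext i j
  fin_cases i <;> fin_cases j <;>
    simp [Tm, Matrix.mul_apply, Fin.sum_univ_two] <;> ring

lemma twigDet_invariant {L M : List ℤ} (h : ContractStep L M) : twigDet L = twigDet M := by
  cases h with
  | interior L R a b =>
      rw [twigDet_eq_Pm, twigDet_eq_Pm]
      have e1 : L ++ a :: 1 :: b :: R = L ++ ([a, 1, b] ++ R) := by simp
      have e2 : L ++ (a-1) :: (b-1) :: R = L ++ ([a-1, b-1] ++ R) := by simp
      rw [e1, e2, Pm_append, Pm_append, Pm_append, Pm_append]
      have : Pm [a, 1, b] = Pm [a-1, b-1] := by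
        show (Tm a * (Tm 1 * (Tm b * 1))) = (Tm (a-1) * (Tm (b-1) * 1))
        rw [mul_one, mul_one, ← mul_assoc, Tm_key]
      rw [this]
  | left b R =>
      rw [twigDet_eq_Pm, twigDet_eq_Pm, Pm_cons00, Pm_cons00, Pm_cons10, Pm_cons00]
      ring
  | right L a =>
      rw [twigDet_eq_Pm, twigDet_eq_Pm, Pm_append, Pm_append, mul00, mul00]
      have ha : Pm [a, 1] 0 0 = Pm [a-1] 0 0 := by
        rw [Pm_cons00, Pm_cons00, Pm_cons00, Pm_cons10]; simp
      have hb : Pm [a, 1] 1 0 = Pm [a-1] 1 0 := by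
        rw [Pm_cons10, Pm_cons10, Pm_cons00]; simp
      rw [ha, hb]
  | single => rw [twigDet_singleton, twigDet_nil]

lemma twigDet_contracts {L M : List ℤ} (h : Contracts L M) : twigDet L = twigDet M := by
  induction h with
  | refl => rfl
  | tail _ hstep ih => exact ih.trans (twigDet_invariant hstep)

lemma twigDet_pos (L : List ℤ) (h : Admissible L) : 1 ≤ twigDet L := by
  obtain ⟨h1, h2, _⟩ := Pm_pos L h
  rw [twigDet_eq_Pm]; omega

lemma main_contract : ∀ (n : ℕ) (A B : List ℤ), A.length + B.length ≤ n →
    Admissible A → Admissible B → twigDet (A ++ 1 :: B) = 0 →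
    Contracts (A ++ 1 :: B) [0] := by
  intro n
  induction n with
  | zero =>
      intro A B hlen hA hB hd
      have : A = [] ∧ B = [] := by
        constructor <;> (apply List.length_eq_zero_iff.mp; omega)
      obtain ⟨rfl, rfl⟩ := this
      rw [show ([] ++ 1 :: [] : List ℤ) = [1] from rfl, twigDet_singleton] at hd
      exact absurd hd one_ne_zero
  | succ n IH =>
      intro A B hlen hA hB hd
      rcases List.eq_nil_or_concat A with rfl | ⟨A₁, a, rfl⟩
      · -- A = [] : contradiction
        exfalso
        rw [show ([] ++ 1 :: B : List ℤ) = 1 :: B from rfl, twigDet_eq_Pm, Pm_cons00] at hd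
        obtain ⟨h1, h2, _⟩ := Pm_pos B hB
        omega
      · simp only [List.concat_eq_append] at hA hlen hd ⊢
        have ha2 : (2:ℤ) ≤ a := hA a (by simp)
        have hA₁ : Admissible A₁ := fun x hx => hA x (by simp [hx])
        rcases B with _ | ⟨b, B₂⟩
        · -- B = [] : contradiction
          exfalso
          rw [show (A₁ ++ [a]) ++ 1 :: [] = A₁ ++ [a, 1] by simp, twigDet_eq_Pm,
            Pm_append, mul00] at hd
          have e1 : Pm [a, 1] 0 0 = a - 1 := by
            norm_num [Pm_cons00, Pm_cons10]
          have e2 : Pm [a, 1] 1 0 = 1 := by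
            norm_num [Pm_cons00, Pm_cons10]
          rw [e1, e2] at hd
          obtain ⟨h1, h2, h3, h4, h5, _⟩ := Pm_pos A₁ hA₁
          nlinarith
        · have hb2 : (2:ℤ) ≤ b := hB b (by simp)
          have hB₂ : Admissible B₂ := fun x hx => hB x (by simp [hx])
          have hre : (A₁ ++ [a]) ++ 1 :: b :: B₂ = A₁ ++ a :: 1 :: b :: B₂ := by simp
          have hstep : ContractStep (A₁ ++ a :: 1 :: b :: B₂) (A₁ ++ (a-1) :: (b-1) :: B₂) :=
            ContractStep.interior A₁ B₂ a b
          have hd2 : twigDet (A₁ ++ (a-1) :: (b-1) :: B₂) = 0 := by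
            rw [← twigDet_invariant hstep, ← hre]; exact hd
          rw [hre]
          rcases eq_or_lt_of_le ha2 with ha | ha <;> rcases eq_or_lt_of_le hb2 with hb | hb
          · -- a = 2, b = 2
            subst ha; subst hb
            norm_num at hd2
            have hsplit : A₁ ++ (1:ℤ)::1::B₂ = A₁ ++ ([1,1] ++ B₂) := by simp
            rw [hsplit, twigDet_eq_Pm, Pm_append, Pm_append, mul00, mul00, mul10] at hd2
            have p1 : Pm [(1:ℤ),1] 0 0 = 0 := by norm_num [Pm_cons00, Pm_cons10]
            have p2 : Pm [(1:ℤ),1] 0 1 = -1 := by norm_num [Pm_cons01, Pm_cons11]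
            have p3 : Pm [(1:ℤ),1] 1 0 = 1 := by norm_num [Pm_cons00, Pm_cons10]
            have p4 : Pm [(1:ℤ),1] 1 1 = -1 := by norm_num [Pm_cons01, Pm_cons11]
            rw [p1, p2, p3, p4] at hd2
            obtain ⟨a1, a2, a3, a4, a5, _⟩ := Pm_pos A₁ hA₁
            obtain ⟨b1, b2, _⟩ := Pm_pos B₂ hB₂
            have he : Pm B₂ 1 0 = 0 := by nlinarith
            have hq : Pm A₁ 0 1 = 0 := by nlinarith
            have hBnil : B₂ = [] := by
              by_contra hne
              have := (Pm_pos_ne B₂ hB₂ hne).1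
              omega
            have hAnil : A₁ = [] := by
              by_contra hne
              have := (Pm_pos_ne A₁ hA₁ hne).2
              omega
            subst hBnil; subst hAnil
            refine Relation.ReflTransGen.head (ContractStep.interior [] [] 2 2) ?_
            have h11 : ([] ++ ((2:ℤ)-1)::((2:ℤ)-1)::[] : List ℤ) = 1::1::[] := by norm_num
            rw [h11]
            refine Relation.ReflTransGen.head (ContractStep.left 1 []) ?_
            have h0 : (((1:ℤ)-1)::[] : List ℤ) = [0] := by norm_num
            rw [h0]
          · -- a = 2, b ≥ 3
            subst ha
            refine Relation.ReflTransGen.head hstep ?_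
            have h1 : (A₁ ++ ((2:ℤ)-1)::(b-1)::B₂ : List ℤ) = A₁ ++ 1::((b-1)::B₂) := by norm_num
            rw [h1] at hd2 ⊢
            apply IH A₁ ((b-1)::B₂)
            · simp only [List.length_append, List.length_cons, List.length_singleton] at hlen ⊢
              omega
            · exact hA₁
            · intro x hx
              rcases hx with _ | ⟨_, hx⟩
              · omega
              · exact hB₂ x hx
            · exact hd2
          · -- a ≥ 3, b = 2
            subst hb
            refine Relation.ReflTransGen.head hstep ?_
            have h1 : (A₁ ++ (a-1)::((2:ℤ)-1)::B₂ : List ℤ) = (A₁ ++ [a-1]) ++ 1::B₂ := by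
              norm_num
            rw [h1] at hd2 ⊢
            apply IH (A₁ ++ [a-1]) B₂
            · simp only [List.length_append, List.length_cons, List.length_singleton] at hlen ⊢
              omega
            · intro x hx
              rcases List.mem_append.mp hx with hx | hx
              · exact hA₁ x hx
              · rcases hx with _ | ⟨_, hx⟩
                · omega
                · cases hx
            · exact hB₂
            · exact hd2
          · -- a ≥ 3, b ≥ 3 : contradiction
            exfalso
            have hadm : Admissible (A₁ ++ (a-1) :: (b-1) :: B₂) := by
              intro x hx
              rcases List.mem_append.mp hx with hx | hx
              · exact hA₁ x hx
              · rcases hx with _ | ⟨_, hx⟩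
                · omega
                · rcases hx with _ | ⟨_, hx⟩
                  · omega
                  · exact hB₂ x hx
            have := twigDet_pos _ hadm
            omega

lemma twigDet_chain (A B : List ℤ) :
    twigDet (A ++ 1 :: B) = Pm A 0 0 * (Pm B 0 0 - Pm B 1 0) + Pm A 0 1 * Pm B 0 0 := by
  rw [twigDet_eq_Pm, Pm_append, mul00, Pm_cons00, Pm_cons10]
  ring

/-- Fujita's contraction criterion: for admissible twigs `A`, `B`, the chain
`[A, 1, B]` contracts to a `0`-curve `[0]` if and only if `B = A*`, i.e.
`e(B) = 1 − e(ᵗA)`. -/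
theorem contracts_to_zero_iff_adjoint (A B : List ℤ)
    (hA : Admissible A) (hAne : A ≠ []) (hB : Admissible B) (hBne : B ≠ []) :
    Contracts (A ++ 1 :: B) [0] ↔ inductance B = 1 - inductance A.reverse := by
  have hrev_ne : A.reverse ≠ [] := fun h => hAne (by simpa using congrArg List.reverse h)
  obtain ⟨ha1, ha2, _⟩ := Pm_pos A hA
  obtain ⟨hb1, hb2, _⟩ := Pm_pos B hB
  have haQ : ((Pm A 0 0 : ℤ) : ℚ) ≠ 0 := by
    have : (1:ℤ) ≤ Pm A 0 0 := by omega
    exact_mod_cast (by omega : Pm A 0 0 ≠ 0)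
  have hbQ : ((Pm B 0 0 : ℤ) : ℚ) ≠ 0 := by
    exact_mod_cast (by omega : Pm B 0 0 ≠ 0)
  have hiB : inductance B = ((Pm B 1 0 : ℤ) : ℚ) / ((Pm B 0 0 : ℤ) : ℚ) := by
    rw [inductance, twigDet_tail B hBne, twigDet_eq_Pm]
  have hiA : inductance A.reverse = ((-Pm A 0 1 : ℤ) : ℚ) / ((Pm A 0 0 : ℤ) : ℚ) := by
    rw [inductance, twigDet_tail _ hrev_ne, twigDet_eq_Pm, Pm_reverse]
    simp
  have key : twigDet (A ++ 1 :: B) = 0 ↔ inductance B = 1 - inductance A.reverse := by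
    rw [twigDet_chain, hiB, hiA]
    constructor
    · intro hz
      have hz' : ((Pm A 0 0 : ℤ) : ℚ) * (Pm B 0 0 - Pm B 1 0) + (Pm A 0 1 : ℚ) * (Pm B 0 0 : ℚ) = 0 := by
        exact_mod_cast hz
      field_simp
      push_cast; linear_combination -hz'
    · intro hq
      field_simp at hq
      have hz' : Pm B 1 0 * Pm A 0 0 = (Pm A 0 0 + Pm A 0 1) * Pm B 0 0 := by
        have hq' : ((Pm B 1 0 * Pm A 0 0 : ℤ) : ℚ) = (((Pm A 0 0 + Pm A 0 1) * Pm B 0 0 : ℤ) : ℚ) := by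
          push_cast at hq ⊢; linear_combination hq
        exact_mod_cast hq'
      linear_combination -hz'
  rw [← key]
  constructor
  · intro h
    have h0 := twigDet_contracts h
    rw [twigDet_singleton] at h0
    exact h0
  · intro h
    exact main_contract (A.length + B.length) A B le_rfl hA hB h
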